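/- Let π be a finitely generated group, V a ℤ[π]-module whose underlying abelian group is free of finite rank, and 0 → V → E → ℤ → 0 a short exact sequence of ℤ[π]-modules with trivial π-action on ℤ, with class c ∈ H¹(π, V) (the image of 1 under the connecting homomorphism). Then c is a torsion element of H¹(π, V) if and only if the induced short exact sequence of ℚ[π]-modules 0 → V⊗ℚ → E⊗ℚ → ℚ → 0 admits a π-equivariant splitting. -/

import Mathlib

/-!
Both conditions say that some `n > 0` lifts along `p` to a `π`-invariant `y ∈ E`. If `n • c` is
the coboundary `g ↦ ρV g v - v`, then `y = n • e - i v` is invariant; conversely such a `y` is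
`n • e + i v'`, and its invariance says that `n • c` is the coboundary of `-v'`. Over `ℚ`,
clearing the denominator of `s 1` for an invariant splitting `s` gives such a `y`, whose
invariance descends from `ℚ ⊗ E` to `E` because `E`, an extension of `ℤ` by the free module `V`,
is torsion-free.
-/

open TensorProduct Module nonZeroDivisors

lemma Module.IsTorsionFree.of_exact {R V E W : Type*} [CommRing R]
    [AddCommGroup V] [Module R V] [AddCommGroup E] [Module R E] [AddCommGroup W] [Module R W]
    [IsTorsionFree R V] [IsTorsionFree R W] {i : V →ₗ[R] E} {p : E →ₗ[R] W}
    (hi : Function.Injective i) (hexact : LinearMap.range i = LinearMap.ker p) :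
    IsTorsionFree R E where
  isSMulRegular r hr x y hxy := by
    have hp : p x = p y := hr.isSMulRegular (by simpa using congrArg p hxy)
    obtain ⟨v, hv⟩ : x - y ∈ LinearMap.range i := by
      rw [hexact, LinearMap.mem_ker, map_sub, hp, sub_self]
    have hv0 : v = 0 := hr.isSMulRegular <| hi <| by
      simp only [map_smul, hv, smul_sub, smul_zero, map_zero]
      exact sub_eq_zero.mpr hxy
    rw [← sub_eq_zero, ← hv, hv0, map_zero]

lemma injective_one_tmul_of_isFractionRing (R K : Type*) {M : Type*} [CommRing R] [Field K]
    [Algebra R K] [IsFractionRing R K] [AddCommGroup M] [Module R M] [IsTorsionFree R M] :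
    Function.Injective (TensorProduct.mk R K M 1) :=
  (IsLocalizedModule.injective_iff_isRegular R⁰ _).mpr fun c ↦
    (isRegular_iff_mem_nonZeroDivisors.mpr c.2).isSMulRegular

lemma exists_pos_natCast_iff_exists_mem_nonZeroDivisors {P : ℤ → Prop}
    (hneg : ∀ r, P r → P (-r)) : (∃ n : ℕ, 0 < n ∧ P n) ↔ ∃ r ∈ ℤ⁰, P r := by
  constructor
  · rintro ⟨n, hn, hP⟩
    exact ⟨n, mem_nonZeroDivisors_of_ne_zero (by omega), hP⟩
  · rintro ⟨r, hr, hP⟩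
    refine ⟨r.natAbs, Int.natAbs_pos.mpr (nonZeroDivisors.ne_zero hr), ?_⟩
    rcases Int.natAbs_eq r with h | h
    · rwa [← h]
    · rw [h] at hP
      simpa only [neg_neg] using hneg _ hP

theorem exists_smul_cocycle_eq_coboundary_iff {R G V E : Type*} [CommRing R] [Monoid G]
    [AddCommGroup V] [Module R V] [AddCommGroup E] [Module R E]
    {ρV : Representation R G V} {ρE : Representation R G E} {i : V →ₗ[R] E} {p : E →ₗ[R] R}
    {e : E} {c : G → V} (hi : Function.Injective i)
    (hexact : LinearMap.range i = LinearMap.ker p)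
    (hiequiv : ∀ g : G, (ρE g).comp i = i.comp (ρV g)) (he : p e = 1)
    (hc : ∀ g : G, i (c g) = ρE g e - e) (r : R) :
    (∃ v : V, ∀ g : G, r • c g = ρV g v - v) ↔ ∃ y : E, p y = r ∧ ∀ g : G, ρE g y = y := by
  have hρi (g : G) (v : V) : ρE g (i v) = i (ρV g v) := LinearMap.congr_fun (hiequiv g) v
  constructor
  · rintro ⟨v, hv⟩
    have hpi : p (i v) = 0 := LinearMap.mem_ker.mp (hexact ▸ LinearMap.mem_range_self i v)
    refine ⟨r • e - i v, by simp [hpi, he], fun g ↦ ?_⟩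
    have hρv : ρV g v = v + r • c g := by rw [hv g]; abel
    rw [map_sub, map_smul, hρi, hρv, map_add, map_smul, hc]
    module
  · rintro ⟨y, hy, hfix⟩
    obtain ⟨v, hv⟩ : y - r • e ∈ LinearMap.range i := by
      rw [hexact, LinearMap.mem_ker, map_sub, map_smul, hy, he, smul_eq_mul, mul_one, sub_self]
    refine ⟨-v, fun g ↦ hi ?_⟩
    have hρy := hfix g
    rw [show y = r • e + i v by rw [hv]; abel, map_add, map_smul, hρi] at hρy
    rw [map_smul, hc, map_sub, map_neg, map_neg, map_neg]
    linear_combination (norm := module) hρy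

theorem exists_invariant_section_baseChange_iff {R K G E : Type*} [CommRing R] [Field K]
    [Algebra R K] [IsFractionRing R K] [Monoid G] [AddCommGroup E] [Module R E]
    [IsTorsionFree R E] (ρ : Representation R G E) (p : E →ₗ[R] R) :
    (∃ s : K →ₗ[K] K ⊗[R] E,
      (((Algebra.linearMap R K).comp p).liftBaseChange K).comp s = LinearMap.id ∧
      ∀ (g : G) (q : K), LinearMap.baseChange K (ρ g) (s q) = s q) ↔
    ∃ r ∈ R⁰, ∃ y : E, p y = r ∧ ∀ g : G, ρ g y = y := by
  set L := ((Algebra.linearMap R K).comp p).liftBaseChange K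
  constructor
  · rintro ⟨s, hs, hfix⟩
    obtain ⟨⟨y, r⟩, hr⟩ := IsLocalizedModule.surj R⁰ (TensorProduct.mk R K E 1) (s 1)
    replace hr : (r : R) • s 1 = 1 ⊗ₜ y := hr
    have hs1 : L (s 1) = 1 := LinearMap.congr_fun hs 1
    have hpy : p y = r := by
      simpa [L, hs1, Algebra.smul_def] using (congrArg L hr).symm
    refine ⟨r, r.2, y, hpy, fun g ↦ ?_⟩
    apply injective_one_tmul_of_isFractionRing R K
    calc (1 : K) ⊗ₜ[R] ρ g y = LinearMap.baseChange K (ρ g) ((r : R) • s 1) := by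
          rw [hr, LinearMap.baseChange_tmul]
      _ = (1 : K) ⊗ₜ y := by rw [LinearMap.map_smul_of_tower, hfix, hr]
  · rintro ⟨r, hr, y, hy, hfix⟩
    have hr' : algebraMap R K r ≠ 0 := (IsLocalization.map_units K ⟨r, hr⟩).ne_zero
    refine ⟨LinearMap.toSpanSingleton K _ ((algebraMap R K r)⁻¹ ⊗ₜ y), ?_, fun g q ↦ ?_⟩
    · ext
      simp [L, hy, hr']
    · simp [hfix]

theorem stmt_10_general {π V E : Type*} [Group π]
    [AddCommGroup V] [Module ℤ V] [Module.Free ℤ V]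
    [AddCommGroup E] [Module ℤ E]
    (ρV : Representation ℤ π V) (ρE : Representation ℤ π E)
    (i : V →ₗ[ℤ] E) (p : E →ₗ[ℤ] ℤ)
    (hi : Function.Injective i)
    (hexact : LinearMap.range i = LinearMap.ker p)
    (hiequiv : ∀ g : π, (ρE g).comp i = i.comp (ρV g))
    (e : E) (he : p e = 1)
    (c : π → V) (hc : ∀ g : π, i (c g) = ρE g e - e) :
    (∃ n : ℕ, 0 < n ∧ ∃ v : V, ∀ g : π, (n : ℤ) • c g = ρV g v - v) ↔
    (∃ s : ℚ →ₗ[ℚ] ℚ ⊗[ℤ] E,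
      (((Algebra.linearMap ℤ ℚ).comp p).liftBaseChange ℚ).comp s = LinearMap.id ∧
      ∀ (g : π) (q : ℚ), LinearMap.baseChange ℚ (ρE g) (s q) = s q) := by
  -- `(n : ℤ) • c g` above is `zsmul`, which is the action of this canonical `ℤ`-module structure.
  obtain rfl : ‹Module ℤ V› = AddCommGroup.toIntModule V := Subsingleton.elim _ _
  have : IsTorsionFree ℤ E := .of_exact hi hexact
  rw [exists_invariant_section_baseChange_iff, ← exists_pos_natCast_iff_exists_mem_nonZeroDivisors]
  · exact exists_congr fun n ↦ and_congr_right fun _ ↦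
      exists_smul_cocycle_eq_coboundary_iff hi hexact hiequiv he hc (n : ℤ)
  · rintro r ⟨y, hy, hfix⟩
    exact ⟨-y, by simp [hy], by simp [hfix]⟩

/-- For a short exact sequence `0 → V → E → ℤ → 0` of `ℤ[π]`-modules (`π` finitely
generated, `V` free of finite rank over `ℤ`, trivial action on `ℤ`), with extension class
`c ∈ H¹(π, V)` represented by the 1-cocycle `g ↦ ρE g e - e` for a lift `e` of `1`:
`c` is torsion in `H¹(π, V)` (i.e. some positive multiple of the cocycle is a coboundary)
iff the rationalized extension `0 → V⊗ℚ → E⊗ℚ → ℚ → 0` admits a `π`-equivariant splitting. -/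
theorem stmt_10 {π V E : Type*} [Group π] [Group.FG π]
    [AddCommGroup V] [Module ℤ V] [Module.Free ℤ V] [Module.Finite ℤ V]
    [AddCommGroup E] [Module ℤ E]
    (ρV : Representation ℤ π V) (ρE : Representation ℤ π E)
    (i : V →ₗ[ℤ] E) (p : E →ₗ[ℤ] ℤ)
    (hi : Function.Injective i) (hp : Function.Surjective p)
    (hexact : LinearMap.range i = LinearMap.ker p)
    (hiequiv : ∀ g : π, (ρE g).comp i = i.comp (ρV g))
    (hpequiv : ∀ g : π, p.comp (ρE g) = p)  -- trivial π-action on ℤ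
    (e : E) (he : p e = 1)
    (c : π → V) (hc : ∀ g : π, i (c g) = ρE g e - e) :
    (∃ n : ℕ, 0 < n ∧ ∃ v : V, ∀ g : π, (n : ℤ) • c g = ρV g v - v) ↔
    (∃ s : ℚ →ₗ[ℚ] ℚ ⊗[ℤ] E,
      (((Algebra.linearMap ℤ ℚ).comp p).liftBaseChange ℚ).comp s = LinearMap.id ∧
      ∀ (g : π) (q : ℚ), LinearMap.baseChange ℚ (ρE g) (s q) = s q) :=
  stmt_10_general ρV ρE i p hi hexact hiequiv e he c hc
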